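/- The ring homomorphism ℂ[u,v,s]/(uᵏv − (s^d−1)^{m'}) → ℂ[u,w,s]/(uᵐw − (s^d−1)) determined by u ↦ u, s ↦ s, v ↦ w^{m'} is well-defined and injective, where k = m·m'. -/

import Mathlib

/-!
Send `v ↦ (s^d - 1)^{m'} / u^k` and `w ↦ (s^d - 1) / u^m` into the fraction field `K` of
`ℂ[u, s]`; the map from the source quotient factors through `ψ`, so it suffices that it is
injective. For a domain `R`, a prime `p` and `p ∤ b`, the kernel of `R[X] → Frac R`,
`X ↦ b / p^i`, is `(p^i X - b)`: if `P` lies in the kernel, then `p^{i·deg P} P` is congruent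
modulo `p^i X - b` to the constant `(scaleRoots P (p^i))(b) = 0`, and the power of `p` cancels
because the prime `p` does not divide `p^i X - b`.
-/

namespace Polynomial

variable {R K : Type*} [CommRing R]

theorem C_mul_X_sub_C_dvd_C_pow_natDegree_mul_sub (a b : R) (P : R[X]) :
    C a * X - C b ∣ C a ^ P.natDegree * P - C ((P.scaleRoots a).eval b) := by
  have hX : (P.scaleRoots a).eval₂ C (C a * X) = C a ^ P.natDegree * P := by
    rw [scaleRoots_eval₂_mul, eval₂_C_X]
  rw [← hX, ← eval₂_at_apply, ← eval_map, ← eval_map]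
  exact sub_dvd_eval_sub _ _ _

theorem eval_scaleRoots_eq_zero_of_eval₂_div_eq_zero [Field K] {φ : R →+* K}
    (hφ : Function.Injective φ) {a b : R} (ha : φ a ≠ 0) {P : R[X]}
    (hP : P.eval₂ φ (φ b / φ a) = 0) : (P.scaleRoots a).eval b = 0 := by
  apply hφ
  rw [map_zero, ← eval₂_at_apply, ← mul_div_cancel₀ (φ b) ha, scaleRoots_eval₂_mul, hP,
    mul_zero]

variable [IsDomain R]

theorem mem_span_of_C_pow_mul_mem {p b : R} (hp : Prime p) (hb : ¬ p ∣ b) {i N : ℕ} {P : R[X]}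
    (h : C (p ^ N) * P ∈ Ideal.span {C (p ^ i) * X - C b}) :
    P ∈ Ideal.span {C (p ^ i) * X - C b} := by
  rw [Ideal.mem_span_singleton] at h ⊢
  obtain ⟨Q, hQ⟩ := h
  have hCp : Prime (C p) := prime_C_iff.mpr hp
  have hCp_not_dvd : ¬ C p ∣ C (p ^ i) * X - C b := fun hdvd =>
    hb (by simpa using (C_dvd_iff_dvd_coeff _ _).mp hdvd 0)
  rw [C_pow] at hQ
  obtain ⟨Q', rfl⟩ := hCp.pow_dvd_of_dvd_mul_left N hCp_not_dvd ⟨P, hQ.symm⟩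
  exact ⟨Q', mul_left_cancel₀ (pow_ne_zero N hCp.ne_zero) (by rw [hQ]; ring)⟩

theorem ker_eval₂RingHom_div_pow [Field K] {φ : R →+* K} (hφ : Function.Injective φ)
    {p b : R} (hp : Prime p) (hb : ¬ p ∣ b) (i : ℕ) :
    RingHom.ker (eval₂RingHom φ (φ b / φ p ^ i)) = Ideal.span {C (p ^ i) * X - C b} := by
  have hpi : φ (p ^ i) ≠ 0 :=
    (map_ne_zero_iff φ hφ).mpr (pow_ne_zero i hp.ne_zero)
  apply le_antisymm
  · intro P hP
    rw [RingHom.mem_ker, coe_eval₂RingHom, ← map_pow] at hP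
    have hdvd := C_mul_X_sub_C_dvd_C_pow_natDegree_mul_sub (p ^ i) b P
    rw [eval_scaleRoots_eq_zero_of_eval₂_div_eq_zero hφ hpi hP, C_0, sub_zero, ← C_pow,
      ← pow_mul] at hdvd
    exact mem_span_of_C_pow_mul_mem hp hb (Ideal.mem_span_singleton.mpr hdvd)
  · rw [Ideal.span_le, Set.singleton_subset_iff, SetLike.mem_coe, RingHom.mem_ker]
    simp [← map_pow, mul_div_cancel₀ _ hpi]

end Polynomial

namespace MvPolynomial

variable {k : Type*} [CommRing k]

noncomputable def finThreeEquivPolynomial :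
    MvPolynomial (Fin 3) k ≃ₐ[k] Polynomial (MvPolynomial (Fin 2) k) :=
  (renameEquiv k (Equiv.swap 0 1)).trans (finSuccEquiv k 2)

@[simp]
theorem finThreeEquivPolynomial_X_zero :
    finThreeEquivPolynomial (X 0 : MvPolynomial (Fin 3) k) = Polynomial.C (X 0) := by
  simp [finThreeEquivPolynomial, ← finSuccEquiv_X_succ]

@[simp]
theorem finThreeEquivPolynomial_X_one :
    finThreeEquivPolynomial (X 1 : MvPolynomial (Fin 3) k) = Polynomial.X := by
  simp [finThreeEquivPolynomial, ← finSuccEquiv_X_zero]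

@[simp]
theorem finThreeEquivPolynomial_X_two :
    finThreeEquivPolynomial (X 2 : MvPolynomial (Fin 3) k) = Polynomial.C (X 1) := by
  simp [finThreeEquivPolynomial, Equiv.swap_apply_of_ne_of_ne, ← finSuccEquiv_X_succ]

@[simp]
theorem finThreeEquivPolynomial_C (c : k) :
    finThreeEquivPolynomial (C c : MvPolynomial (Fin 3) k) = Polynomial.C (C c) :=
  finThreeEquivPolynomial.commutes c

noncomputable def evalX1 (t : FractionRing (MvPolynomial (Fin 2) k)) :
    MvPolynomial (Fin 3) k →+* FractionRing (MvPolynomial (Fin 2) k) :=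
  (Polynomial.eval₂RingHom (algebraMap _ _) t).comp
    finThreeEquivPolynomial.toRingEquiv.toRingHom

@[simp]
theorem evalX1_C (t : FractionRing (MvPolynomial (Fin 2) k)) (c : k) :
    evalX1 t (C c) = algebraMap (MvPolynomial (Fin 2) k) _ (C c) := by
  simp [evalX1]

@[simp]
theorem evalX1_X_zero (t : FractionRing (MvPolynomial (Fin 2) k)) :
    evalX1 t (X 0) = algebraMap (MvPolynomial (Fin 2) k) _ (X 0) := by
  simp [evalX1]

@[simp]
theorem evalX1_X_one (t : FractionRing (MvPolynomial (Fin 2) k)) : evalX1 t (X 1) = t := by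
  simp [evalX1]

@[simp]
theorem evalX1_X_two (t : FractionRing (MvPolynomial (Fin 2) k)) :
    evalX1 t (X 2) = algebraMap (MvPolynomial (Fin 2) k) _ (X 1) := by
  simp [evalX1]

variable [IsDomain k]

theorem not_X_zero_dvd_X_one_pow_sub_one {d : ℕ} (hd : d ≠ 0) :
    ¬ (X 0 : MvPolynomial (Fin 2) k) ∣ X 1 ^ d - 1 := by
  intro h
  have := map_dvd (constantCoeff (R := k) (σ := Fin 2)) h
  simp [zero_pow hd] at this

theorem ker_evalX1 {d : ℕ} (hd : d ≠ 0) (i j : ℕ) :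
    RingHom.ker (evalX1 (algebraMap (MvPolynomial (Fin 2) k) _ ((X 1 ^ d - 1) ^ j) /
      algebraMap (MvPolynomial (Fin 2) k) _ (X 0) ^ i)) =
      Ideal.span {(X 0 ^ i * X 1 - (X 2 ^ d - 1) ^ j : MvPolynomial (Fin 3) k)} := by
  have hG : Polynomial.C (X 0 ^ i) * Polynomial.X -
      Polynomial.C ((X 1 ^ d - 1) ^ j : MvPolynomial (Fin 2) k) =
      finThreeEquivPolynomial.toRingEquiv
        (X 0 ^ i * X 1 - (X 2 ^ d - 1) ^ j : MvPolynomial (Fin 3) k) := by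
    simp
  ext q
  rw [RingHom.mem_ker, evalX1, RingHom.comp_apply, ← RingHom.mem_ker,
    Polynomial.ker_eval₂RingHom_div_pow (IsFractionRing.injective _ _) X_prime
      (fun h => not_X_zero_dvd_X_one_pow_sub_one hd (X_prime.dvd_of_dvd_pow h)), hG,
    ← Set.image_singleton, ← Ideal.map_span]
  exact Ideal.apply_mem_of_equiv_iff

end MvPolynomial

open MvPolynomial

theorem stmt_9_general (m m' d : ℕ) (hd : 1 ≤ d) :
    ∃ ψ : (MvPolynomial (Fin 3) ℂ ⧸
        Ideal.span {(X 0) ^ (m * m') * X 1 - ((X 2) ^ d - 1) ^ m'}) →+*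
      (MvPolynomial (Fin 3) ℂ ⧸
        Ideal.span {(X 0) ^ m * X 1 - ((X 2) ^ d - 1)}),
      ψ (Ideal.Quotient.mk _ (X 0)) = Ideal.Quotient.mk _ (X 0) ∧
      ψ (Ideal.Quotient.mk _ (X 2)) = Ideal.Quotient.mk _ (X 2) ∧
      ψ (Ideal.Quotient.mk _ (X 1)) = (Ideal.Quotient.mk _ (X 1)) ^ m' ∧
      Function.Injective ψ := by
  let σ : MvPolynomial (Fin 3) ℂ →+* MvPolynomial (Fin 3) ℂ :=
    (aeval (R := ℂ) (![X 0, X 1 ^ m', X 2] : Fin 3 → MvPolynomial (Fin 3) ℂ)).toRingHom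
  have hσ : Ideal.span {(X 0) ^ (m * m') * X 1 - ((X 2) ^ d - 1) ^ m'} ≤
      (Ideal.span {(X 0) ^ m * X 1 - ((X 2) ^ d - 1)}).comap σ := by
    rw [Ideal.span_le, Set.singleton_subset_iff, SetLike.mem_coe, Ideal.mem_comap,
      Ideal.mem_span_singleton]
    convert sub_dvd_pow_sub_pow ((X 0 : MvPolynomial (Fin 3) ℂ) ^ m * X 1) (X 2 ^ d - 1) m'
      using 1
    simp [σ, mul_pow, pow_mul]
  refine ⟨Ideal.quotientMap _ σ hσ, by simp [σ], by simp [σ], by simp [σ], ?_⟩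
  apply Ideal.quotientMap_injective'
  have hd0 : d ≠ 0 := Nat.one_le_iff_ne_zero.mp hd
  set φ := algebraMap (MvPolynomial (Fin 2) ℂ) (FractionRing (MvPolynomial (Fin 2) ℂ))
  have hkerA := ker_evalX1 (k := ℂ) hd0 (m * m') m'
  have hkerB := ker_evalX1 (k := ℂ) hd0 m 1
  simp only [pow_one] at hkerB
  have hcomp : (evalX1 (φ (X 1 ^ d - 1) / φ (X 0) ^ m)).comp σ =
      evalX1 (φ ((X 1 ^ d - 1) ^ m') / φ (X 0) ^ (m * m')) := by
    refine ringHom_ext (fun c => by simp [σ]) fun i => ?_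
    fin_cases i <;> simp [σ, div_pow, pow_mul]
  intro q hq
  rw [Ideal.mem_comap, ← hkerB, RingHom.mem_ker, ← RingHom.comp_apply, hcomp] at hq
  rwa [← hkerA]

/-- The ring homomorphism `ℂ[u,v,s]/(uᵏv − (s^d−1)^{m'}) → ℂ[u,w,s]/(uᵐw − (s^d−1))`
given by `u ↦ u`, `s ↦ s`, `v ↦ w^{m'}` (with `k = m·m'`) is well-defined and
injective. -/
theorem stmt_9 (m m' d : ℕ) (hm : 1 ≤ m) (hm' : 1 ≤ m') (hd : 1 ≤ d) :
    ∃ ψ : (MvPolynomial (Fin 3) ℂ ⧸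
        Ideal.span {(X 0) ^ (m * m') * X 1 - ((X 2) ^ d - 1) ^ m'}) →+*
      (MvPolynomial (Fin 3) ℂ ⧸
        Ideal.span {(X 0) ^ m * X 1 - ((X 2) ^ d - 1)}),
      ψ (Ideal.Quotient.mk _ (X 0)) = Ideal.Quotient.mk _ (X 0) ∧
      ψ (Ideal.Quotient.mk _ (X 2)) = Ideal.Quotient.mk _ (X 2) ∧
      ψ (Ideal.Quotient.mk _ (X 1)) = (Ideal.Quotient.mk _ (X 1)) ^ m' ∧
      Function.Injective ψ :=
  stmt_9_general m m' d hd
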